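/- Let χ be a multiplicative character of F with even conductor a(χ) = 2d, d ≥ 1, let ψ be a nontrivial additive character of F, and let c ∈ F^× satisfy v_F(c) = 2d + n(ψ) and χ(1 + y) = ψ(y/c) for all y ∈ P_F^{d}. Then χ(c)·q_F^{-d}·Σ_{x ∈ U_F/U_F^{2d}} χ(x)^{-1} ψ(x/c) = χ(c)·ψ(1/c); that is, the epsilon factor ε(χ,ψ) equals χ(c)ψ(c^{-1}). -/

import Mathlib

noncomputable section

/-- `x ∈ P_L^i`, the `i`-th power of the maximal ideal of the discrete valuation `v`
(with the convention that `0` lies in every `P_L^i`). -/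
def InP {L : Type*} [Field L] (v : L → ℤ) (i : ℤ) (x : L) : Prop :=
  x = 0 ∨ i ≤ v x

/-- `x ∈ U_L^i`, the `i`-th higher unit group (`U_L^0 = O_L^×`, `U_L^i = 1 + P_L^i` for `i ≥ 1`). -/
def InU {L : Type*} [Field L] (v : L → ℤ) (i : ℕ) (x : L) : Prop :=
  x ≠ 0 ∧ v x = 0 ∧ (i = 0 ∨ InP v (i : ℤ) (x - 1))

/-- `v` is a normalized (surjective) discrete valuation on the field `L`. -/
structure IsDiscreteVal {L : Type*} [Field L] (v : L → ℤ) : Prop where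
  map_mul : ∀ x y : L, x ≠ 0 → y ≠ 0 → v (x * y) = v x + v y
  min_le_add : ∀ x y : L, x ≠ 0 → y ≠ 0 → x + y ≠ 0 → min (v x) (v y) ≤ v (x + y)
  exists_uniformizer : ∃ π : L, π ≠ 0 ∧ v π = 1

/-- `χ` is a multiplicative character of `L^×`, i.e. a homomorphism `L^× → ℂ^×`
that is trivial on some higher unit group. -/
structure IsMulChar {L : Type*} [Field L] (v : L → ℤ) (χ : L → ℂ) : Prop where
  map_one : χ 1 = 1
  map_mul : ∀ x y : L, x ≠ 0 → y ≠ 0 → χ (x * y) = χ x * χ y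
  continuous : ∃ n : ℕ, ∀ x, InU v n x → χ x = 1

/-- `χ` is a multiplicative character of `L^×` with conductor exactly `a`:
it is trivial on `U_L^a` and `a` is the least such index. -/
structure IsMulCharCond {L : Type*} [Field L] (v : L → ℤ) (χ : L → ℂ) (a : ℕ) : Prop where
  map_one : χ 1 = 1
  map_mul : ∀ x y : L, x ≠ 0 → y ≠ 0 → χ (x * y) = χ x * χ y
  triv : ∀ x, InU v a x → χ x = 1
  nontriv : ∀ b : ℕ, b < a → ∃ x, InU v b x ∧ χ x ≠ 1

/-- `ψ` is an additive character of `L`, i.e. a homomorphism `(L,+) → ℂ^×`. -/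
structure IsAddChar {L : Type*} [Field L] (ψ : L → ℂ) : Prop where
  map_zero : ψ 0 = 1
  map_add : ∀ x y : L, ψ (x + y) = ψ x * ψ y

/-- The additive character `ψ` has conductor `n`: it is trivial on `P_L^{-n}` but
nontrivial on `P_L^{-n-1}`. -/
def AddCondEq {L : Type*} [Field L] (v : L → ℤ) (ψ : L → ℂ) (n : ℤ) : Prop :=
  (∀ x, InP v (-n) x → ψ x = 1) ∧ ∃ x, InP v (-n - 1) x ∧ ψ x ≠ 1

/-- `q` is the cardinality of the residue field `O_L/P_L` of `(L, v)`. -/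
def IsResidueCard {L : Type*} [Field L] (v : L → ℤ) (q : ℕ) : Prop :=
  ∃ S : Finset L, S.card = q ∧ (∀ s ∈ S, InP v 0 s) ∧
    ∀ x : L, InP v 0 x → ∃! s, s ∈ S ∧ InP v 1 (x - s)

/-- `S` is a full set of coset representatives for `U_L^i / U_L^j` (where `i ≤ j`). -/
def IsMulReps {L : Type*} [Field L] (v : L → ℤ) (i j : ℕ) (S : Finset L) : Prop :=
  (∀ s ∈ S, InU v i s) ∧ ∀ x, InU v i x → ∃! s, s ∈ S ∧ InU v j (x * s⁻¹)

/-- `S` is a full set of coset representatives for the additive quotient `P_L^i / P_L^j`. -/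
def IsAddReps {L : Type*} [Field L] (v : L → ℤ) (i j : ℤ) (S : Finset L) : Prop :=
  (∀ s ∈ S, InP v i s) ∧ ∀ x, InP v i x → ∃! s, s ∈ S ∧ InP v j (x - s)

/-- `ω` is the quadratic character `ω_{K/F}` of `F^×` attached to the quadratic extension
`K/F` by class field theory: a multiplicative character that is nontrivial, of square one,
and trivial on the norm group `N_{K/F}(K^×)`. -/
structure IsOmega (F K : Type*) [Field F] [Field K] [Algebra F K]
    (vF : F → ℤ) (ω : F → ℂ) : Prop where
  map_one : ω 1 = 1
  map_mul : ∀ x y : F, x ≠ 0 → y ≠ 0 → ω (x * y) = ω x * ω y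
  continuous : ∃ n : ℕ, ∀ x, InU vF n x → ω x = 1
  nontrivial : ∃ x : F, x ≠ 0 ∧ ω x ≠ 1
  sq_one : ∀ x : F, x ≠ 0 → ω x * ω x = 1
  norm_trivial : ∀ y : K, y ≠ 0 → ω (Algebra.norm F y) = 1

section Helpers

variable {L : Type*} [Field L] {v : L → ℤ}

lemma IsDiscreteVal.v_one (hv : IsDiscreteVal v) : v (1 : L) = 0 := by
  have h := hv.map_mul 1 1 one_ne_zero one_ne_zero
  simp at h; omega

lemma IsDiscreteVal.v_neg_one (hv : IsDiscreteVal v) : v (-1 : L) = 0 := by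
  have h := hv.map_mul (-1) (-1) (by norm_num) (by norm_num)
  rw [neg_mul_neg, one_mul, hv.v_one] at h; omega

lemma IsDiscreteVal.v_neg (hv : IsDiscreteVal v) {x : L} (hx : x ≠ 0) : v (-x) = v x := by
  have h := hv.map_mul (-1) x (by norm_num) hx
  rw [neg_one_mul] at h
  rw [h, hv.v_neg_one]; omega

lemma IsDiscreteVal.v_inv (hv : IsDiscreteVal v) {x : L} (hx : x ≠ 0) : v x⁻¹ = - v x := by
  have h := hv.map_mul x x⁻¹ hx (inv_ne_zero hx)
  rw [mul_inv_cancel₀ hx, hv.v_one] at h; omega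

lemma IsDiscreteVal.v_div (hv : IsDiscreteVal v) {x y : L} (hx : x ≠ 0) (hy : y ≠ 0) :
    v (x / y) = v x - v y := by
  rw [div_eq_mul_inv, hv.map_mul x y⁻¹ hx (inv_ne_zero hy), hv.v_inv hy]; ring

lemma IsDiscreteVal.v_pow (hv : IsDiscreteVal v) {x : L} (hx : x ≠ 0) (k : ℕ) :
    v (x ^ k) = k * v x := by
  induction k with
  | zero => simpa using hv.v_one
  | succ m ih =>
      rw [pow_succ, hv.map_mul _ _ (pow_ne_zero _ hx) hx, ih]; push_cast; ring

lemma InP.zero {i : ℤ} : InP v i (0 : L) := Or.inl rfl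

lemma InP.v_le {i : ℤ} {x : L} (h : InP v i x) (hx : x ≠ 0) : i ≤ v x := h.resolve_left hx

lemma InP.of_val {i : ℤ} {x : L} (hx : x ≠ 0) (h : i ≤ v x) : InP v i x := Or.inr h

lemma InP.of_le {i j : ℤ} {x : L} (hij : i ≤ j) (h : InP v j x) : InP v i x := by
  rcases h with h | h
  · exact Or.inl h
  · exact Or.inr (le_trans hij h)

lemma InP.add (hv : IsDiscreteVal v) {i : ℤ} {x y : L} (hx : InP v i x) (hy : InP v i y) :
    InP v i (x + y) := by
  by_cases hx0 : x = 0
  · simpa [hx0] using hy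
  by_cases hy0 : y = 0
  · simpa [hy0] using hx
  by_cases hxy : x + y = 0
  · exact Or.inl hxy
  exact Or.inr (le_trans (le_min (hx.v_le hx0) (hy.v_le hy0)) (hv.min_le_add x y hx0 hy0 hxy))

lemma InP.neg (hv : IsDiscreteVal v) {i : ℤ} {x : L} (h : InP v i x) : InP v i (-x) := by
  by_cases hx0 : x = 0
  · simp [hx0, InP.zero]
  · exact Or.inr (by rw [hv.v_neg hx0]; exact h.v_le hx0)

lemma InP.sub (hv : IsDiscreteVal v) {i : ℤ} {x y : L} (hx : InP v i x) (hy : InP v i y) :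
    InP v i (x - y) := by
  rw [sub_eq_add_neg]; exact hx.add hv (hy.neg hv)

lemma InP.mul (hv : IsDiscreteVal v) {a x : L} (ha : a ≠ 0) {i j : ℤ} (hx : InP v i x)
    (hj : j ≤ v a + i) : InP v j (a * x) := by
  by_cases hx0 : x = 0
  · simp [hx0, InP.zero]
  refine Or.inr ?_
  rw [hv.map_mul a x ha hx0]
  have := hx.v_le hx0; omega

lemma InU.sub_one (hv : IsDiscreteVal v) {i : ℕ} {x : L} (h : InU v i x) :
    InP v (i : ℤ) (x - 1) := by
  rcases h.2.2 with hi | hP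
  · by_cases hx1 : x - 1 = 0
    · exact Or.inl hx1
    · have h2 := hv.min_le_add x (-1) h.1 (by norm_num) (by rwa [← sub_eq_add_neg])
      rw [hv.v_neg_one, h.2.1, ← sub_eq_add_neg] at h2
      refine Or.inr ?_
      rw [hi]; simpa using h2
  · exact hP

lemma InU.mk {i : ℕ} {x : L} (hx : x ≠ 0) (hv0 : v x = 0) (h : InP v (i : ℤ) (x - 1)) :
    InU v i x := ⟨hx, hv0, Or.inr h⟩

lemma InU.one (hv : IsDiscreteVal v) {i : ℕ} : InU v i (1 : L) :=
  ⟨one_ne_zero, hv.v_one, Or.inr (by simpa using (InP.zero (v := v) (i := (i : ℤ))))⟩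

lemma InU.mul (hv : IsDiscreteVal v) {i : ℕ} {x y : L} (hx : InU v i x) (hy : InU v i y) :
    InU v i (x * y) := by
  refine InU.mk (mul_ne_zero hx.1 hy.1)
    (by rw [hv.map_mul _ _ hx.1 hy.1, hx.2.1, hy.2.1]; ring) ?_
  have h1 : x * y - 1 = x * (y - 1) + (x - 1) := by ring
  rw [h1]
  exact (InP.mul hv hx.1 (hy.sub_one hv) (by rw [hx.2.1]; omega)).add hv (hx.sub_one hv)

lemma InU.inv (hv : IsDiscreteVal v) {i : ℕ} {x : L} (hx : InU v i x) : InU v i x⁻¹ := by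
  refine InU.mk (inv_ne_zero hx.1) (by rw [hv.v_inv hx.1, hx.2.1]; ring) ?_
  have h1 : x⁻¹ - 1 = x⁻¹ * (1 - x) := by
    rw [mul_sub, mul_one, inv_mul_cancel₀ hx.1]
  rw [h1]
  have h2 : InP v (i : ℤ) (1 - x) := by
    rw [← neg_sub]; exact (hx.sub_one hv).neg hv
  exact InP.mul hv (inv_ne_zero hx.1) h2 (by rw [hv.v_inv hx.1, hx.2.1]; omega)

lemma one_add_unit (hv : IsDiscreteVal v) {i : ℤ} (hi : 1 ≤ i) {y : L} (hy : InP v i y) :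
    (1 + y) ≠ 0 ∧ v (1 + y) = 0 := by
  by_cases hy0 : y = 0
  · simp [hy0, hv.v_one]
  have hvy : i ≤ v y := hy.v_le hy0
  have h1 : (1 : L) + y ≠ 0 := by
    intro h
    have hy1 : y = -1 := by linear_combination h
    rw [hy1, hv.v_neg_one] at hvy; omega
  have ha := hv.min_le_add 1 y one_ne_zero hy0 h1
  rw [hv.v_one, min_eq_left (by omega)] at ha
  have hb := hv.min_le_add (1 + y) (-y) h1 (neg_ne_zero.2 hy0) (by simp)
  rw [add_neg_cancel_right, hv.v_one, hv.v_neg hy0] at hb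
  refine ⟨h1, ?_⟩
  rcases le_total (v (1 + y)) (v y) with h | h
  · rw [min_eq_left h] at hb; omega
  · rw [min_eq_right h] at hb; omega

lemma IsAddChar.psi_ne_zero {ψ : L → ℂ} (hψ : IsAddChar ψ) (x : L) : ψ x ≠ 0 := by
  intro h
  have h2 := hψ.map_add x (-x)
  rw [add_neg_cancel, hψ.map_zero, h, zero_mul] at h2
  exact one_ne_zero h2

end Helpers

section Reps

variable {L : Type*} [Field L] {v : L → ℤ}

lemma addReps_eq {i j : ℤ} {Y : Finset L} (hY : IsAddReps v i j Y) {s t : L}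
    (hs : s ∈ Y) (ht : t ∈ Y) (h : InP v j (s - t)) : s = t := by
  obtain ⟨u, _, huniq⟩ := hY.2 s (hY.1 s hs)
  have h1 := huniq s ⟨hs, by simpa using (InP.zero (v := v) (i := j))⟩
  have h2 := huniq t ⟨ht, h⟩
  rw [h1, h2]

lemma exists_addReps (hv : IsDiscreteVal v) {q : ℕ} (hq : IsResidueCard v q) :
    ∀ (k : ℕ) (i : ℕ), ∃ Y : Finset L,
      IsAddReps v (i : ℤ) ((i : ℤ) + (k : ℕ)) Y ∧ Y.card = q ^ k := by
  intro k
  induction k with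
  | zero =>
      intro i
      refine ⟨{0}, ⟨?_, ?_⟩, by simp⟩
      · intro s hs
        rw [Finset.mem_singleton] at hs
        rw [hs]; exact InP.zero
      · intro x hx
        refine ⟨0, ⟨Finset.mem_singleton_self 0, by simpa using hx⟩, ?_⟩
        rintro y ⟨hy, -⟩
        rwa [Finset.mem_singleton] at hy
  | succ m ih =>
      intro i
      classical
      obtain ⟨R, hRcard, hR0, hRrep⟩ := hq
      obtain ⟨π, hπ0, hπ1⟩ := hv.exists_uniformizer
      obtain ⟨Y, hY, hYcard⟩ := ih (i + 1)
      have hπine : π ^ i ≠ 0 := pow_ne_zero _ hπ0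
      have hπi : v (π ^ i) = i := by rw [hv.v_pow hπ0, hπ1]; ring
      have hidx : (((i + 1 : ℕ)) : ℤ) + ((m : ℕ) : ℤ) = (i : ℤ) + ((m + 1 : ℕ) : ℤ) := by
        push_cast; ring
      have hYmem : ∀ y ∈ Y, InP v ((i : ℤ) + 1) y := by
        intro y hy
        have := hY.1 y hy
        exact this.of_le (by push_cast; omega) |>.of_le (le_refl _) |>.of_le (le_refl _) |>.of_le (le_refl _)
      refine ⟨(R ×ˢ Y).image (fun p => π ^ i * p.1 + p.2), ⟨?_, ?_⟩, ?_⟩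
      · -- membership
        intro z hz
        obtain ⟨⟨s, y⟩, hmem, rfl⟩ := Finset.mem_image.1 hz
        rw [Finset.mem_product] at hmem
        refine InP.add hv ?_ ((hYmem y hmem.2).of_le (by omega))
        exact InP.mul hv hπine (hR0 s hmem.1) (by omega)
      · -- reps
        intro x hx
        have hx' : InP v 0 (x * (π ^ i)⁻¹) := by
          rw [mul_comm]
          exact InP.mul hv (inv_ne_zero hπine) hx (by rw [hv.v_inv hπine, hπi]; omega)
        obtain ⟨s, ⟨hsR, hs1⟩, hsu⟩ := hRrep (x * (π ^ i)⁻¹) hx'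
        have hxs : InP v ((i : ℤ) + 1) (x - π ^ i * s) := by
          have e : x - π ^ i * s = π ^ i * (x * (π ^ i)⁻¹ - s) := by
            field_simp
          rw [e]
          exact InP.mul hv hπine hs1 (by omega)
        obtain ⟨y, ⟨hyY, hy1⟩, hyu⟩ := hY.2 (x - π ^ i * s) hxs
        rw [hidx] at hy1
        refine ⟨π ^ i * s + y, ⟨Finset.mem_image.2 ⟨(s, y), Finset.mem_product.2 ⟨hsR, hyY⟩, rfl⟩, ?_⟩, ?_⟩
        · have e : x - (π ^ i * s + y) = (x - π ^ i * s) - y := by ring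
          rw [e]; exact hy1
        · rintro t ⟨htY', ht1⟩
          obtain ⟨⟨s', y'⟩, hmem, rfl⟩ := Finset.mem_image.1 htY'
          rw [Finset.mem_product] at hmem
          simp only at ht1 ⊢
          have h1 : InP v ((i : ℤ) + 1) (x - π ^ i * s') := by
            have e : x - π ^ i * s' = (x - (π ^ i * s' + y')) + y' := by ring
            rw [e]
            exact InP.add hv (ht1.of_le (by push_cast; omega)) (hYmem y' hmem.2)
          have h2 : InP v 1 (x * (π ^ i)⁻¹ - s') := by
            have e : x * (π ^ i)⁻¹ - s' = (π ^ i)⁻¹ * (x - π ^ i * s') := by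
              rw [mul_sub, ← mul_assoc, inv_mul_cancel₀ hπine, one_mul, mul_comm x]
            rw [e]
            exact InP.mul hv (inv_ne_zero hπine) h1 (by rw [hv.v_inv hπine, hπi]; omega)
          have hs's : s' = s := hsu s' ⟨hmem.1, h2⟩
          subst hs's
          have h3 : InP v ((((i + 1 : ℕ)) : ℤ) + ((m : ℕ) : ℤ)) ((x - π ^ i * s') - y') := by
            have e : (x - π ^ i * s') - y' = x - (π ^ i * s' + y') := by ring
            rw [e, hidx]
            exact ht1
          have := hyu y' ⟨hmem.2, h3⟩
          rw [this]
      · -- cardinality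
        rw [Finset.card_image_of_injOn, Finset.card_product, hRcard, hYcard, pow_succ]
        · ring
        · rintro ⟨s1, y1⟩ hm1 ⟨s2, y2⟩ hm2 heq
          simp only [Finset.mem_coe, Finset.mem_product] at hm1 hm2
          simp only at heq
          have hdiff : π ^ i * (s1 - s2) = y2 - y1 := by linear_combination heq
          have h5 : InP v ((i : ℤ) + 1) (π ^ i * (s1 - s2)) := by
            rw [hdiff]
            exact (hYmem y2 hm2.2).sub hv (hYmem y1 hm1.2)
          have h6 : InP v 1 (s1 - s2) := by
            have e : s1 - s2 = (π ^ i)⁻¹ * (π ^ i * (s1 - s2)) := by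
              rw [← mul_assoc, inv_mul_cancel₀ hπine, one_mul]
            rw [e]
            exact InP.mul hv (inv_ne_zero hπine) h5 (by rw [hv.v_inv hπine, hπi]; omega)
          obtain ⟨u, _, huniq⟩ := hRrep s1 (hR0 s1 hm1.1)
          have e1 := huniq s1 ⟨hm1.1, by simpa using (InP.zero (v := v) (i := 1))⟩
          have e2 := huniq s2 ⟨hm2.1, h6⟩
          have hss : s1 = s2 := e1.trans e2.symm
          subst hss
          have hyy : y1 = y2 := by
            have := add_left_cancel heq
            exact this
          rw [hyy]

end Reps

/-- The summand of the epsilon factor sum. -/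
def eterm {F : Type*} [Field F] (χ ψ : F → ℂ) (c x : F) : ℂ := (χ x)⁻¹ * ψ (x / c)

/-- (Even conductor case of the Lamprecht–Tate formula.) If `a(χ) = 2d` with
`d ≥ 1` and `c` satisfies `v_F(c) = 2d + n(ψ)` and `χ(1+y) = ψ(y/c)` for `y ∈ P_F^d`, then
`ε(χ,ψ) = χ(c)·q_F^{-d}·Σ_{x ∈ U_F/U_F^{2d}} χ(x)⁻¹ ψ(x/c) = χ(c)·ψ(c⁻¹)`. -/
theorem epsilon_even_conductor
    {F : Type*} [Field F] [CharZero F]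
    (vF : F → ℤ) (hvF : IsDiscreteVal vF)
    (q : ℕ) (hq : IsResidueCard vF q)
    (χ : F → ℂ) (d : ℕ) (hd : 1 ≤ d) (hχ : IsMulCharCond vF χ (2 * d))
    (ψ : F → ℂ) (hψ : IsAddChar ψ) (n : ℤ) (hψcond : AddCondEq vF ψ n)
    (c : F) (hc0 : c ≠ 0) (hvc : vF c = 2 * (d : ℤ) + n)
    (hcchar : ∀ y : F, InP vF (d : ℤ) y → χ (1 + y) = ψ (y / c)) :
    ∀ S : Finset F, IsMulReps vF 0 (2 * d) S →
      χ c * (q : ℂ) ^ (-(d : ℤ)) * ∑ x ∈ S, (χ x)⁻¹ * ψ (x / c) = χ c * ψ c⁻¹ := by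
  intro S hS
  classical
  have hq0 : 0 < q := by
    obtain ⟨R, hc, -, hrep⟩ := hq
    obtain ⟨s, hs, -⟩ := hrep 0 InP.zero
    rw [← hc]
    exact Finset.card_pos.2 ⟨s, hs.1⟩
  obtain ⟨Y, hY, hYcard⟩ := exists_addReps hvF hq d d
  have hψne := hψ.psi_ne_zero
  have hχne : ∀ x : F, x ≠ 0 → χ x ≠ 0 := by
    intro x hx h0
    have h := hχ.map_mul x x⁻¹ hx (inv_ne_zero hx)
    rw [mul_inv_cancel₀ hx, hχ.map_one, h0, zero_mul] at h
    exact one_ne_zero h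
  have htriv : ∀ z : F, InP vF (-n) z → ψ z = 1 := hψcond.1
  have hSmem : ∀ s ∈ S, s ≠ 0 ∧ vF s = 0 := fun s hs => ⟨(hS.1 s hs).1, (hS.1 s hs).2.1⟩
  have hYP : ∀ y ∈ Y, InP vF (d : ℤ) y := hY.1
  have h1y : ∀ {y : F}, InP vF (d : ℤ) y → (1 + y) ≠ 0 ∧ vF (1 + y) = 0 := by
    intro y hy
    exact one_add_unit hvF (by exact_mod_cast hd) hy
  -- representative function for S
  have hgex : ∃ rS : F → F, ∀ z : F, z ≠ 0 → vF z = 0 →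
      rS z ∈ S ∧ InU vF (2 * d) (z * (rS z)⁻¹) := by
    refine ⟨fun z => if h : ∃ s, s ∈ S ∧ InU vF (2 * d) (z * s⁻¹) then h.choose else 0, ?_⟩
    intro z h1 h2
    obtain ⟨s, hs, -⟩ := hS.2 z ⟨h1, h2, Or.inl rfl⟩
    have hex : ∃ s, s ∈ S ∧ InU vF (2 * d) (z * s⁻¹) := ⟨s, hs⟩
    simp only [dif_pos hex]
    exact hex.choose_spec
  obtain ⟨rS, hrS⟩ := hgex
  have hrSeq : ∀ z s : F, z ≠ 0 → vF z = 0 → s ∈ S → InU vF (2 * d) (z * s⁻¹) → rS z = s := by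
    intro z s h1 h2 hsS hrel
    obtain ⟨u, -, huniq⟩ := hS.2 z ⟨h1, h2, Or.inl rfl⟩
    exact (huniq _ (hrS z h1 h2)).trans (huniq s ⟨hsS, hrel⟩).symm
  -- representative function for Y
  have hAex : ∃ rY : F → F, ∀ z : F, InP vF (d : ℤ) z →
      rY z ∈ Y ∧ InP vF ((d : ℤ) + (d : ℕ)) (z - rY z) := by
    refine ⟨fun z => if h : ∃ s, s ∈ Y ∧ InP vF ((d : ℤ) + (d : ℕ)) (z - s) then h.choose
      else 0, ?_⟩
    intro z hz
    obtain ⟨s, hs, -⟩ := hY.2 z hz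
    have hex : ∃ s, s ∈ Y ∧ InP vF ((d : ℤ) + (d : ℕ)) (z - s) := ⟨s, hs⟩
    simp only [dif_pos hex]
    exact hex.choose_spec
  obtain ⟨rY, hrY⟩ := hAex
  have hrYeq : ∀ z s : F, InP vF (d : ℤ) z → s ∈ Y →
      InP vF ((d : ℤ) + (d : ℕ)) (z - s) → rY z = s := by
    intro z s hz hsY hrel
    obtain ⟨u, -, huniq⟩ := hY.2 z hz
    exact (huniq _ (hrY z hz)).trans (huniq s ⟨hsY, hrel⟩).symm
  -- eterm is constant on U^{2d}-cosets
  have hfcon : ∀ z s : F, z ≠ 0 → vF z = 0 → s ≠ 0 → vF s = 0 →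
      InU vF (2 * d) (z * s⁻¹) → eterm χ ψ c z = eterm χ ψ c s := by
    intro z s hz1 hz2 hs1 hs2 hrel
    have hu0 : z * s⁻¹ ≠ 0 := hrel.1
    have hz : z = (z * s⁻¹) * s := by field_simp
    have hχu : χ (z * s⁻¹) = 1 := hχ.triv _ hrel
    have hsplit : z / c = s / c + (z * s⁻¹ - 1) * (s / c) := by
      field_simp
      ring
    have hpsi1 : ψ ((z * s⁻¹ - 1) * (s / c)) = 1 := by
      apply htriv
      rw [mul_comm]
      refine InP.mul hvF (div_ne_zero hs1 hc0) (InU.sub_one hvF hrel) ?_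
      rw [hvF.v_div hs1 hc0, hs2, hvc]
      push_cast; omega
    have hχz : χ z = χ s := by
      conv_lhs => rw [hz]
      rw [hχ.map_mul _ _ hu0 hs1, hχu, one_mul]
    have hψz : ψ (z / c) = ψ (s / c) := by
      rw [hsplit, hψ.map_add, hpsi1, mul_one]
    show (χ z)⁻¹ * ψ (z / c) = (χ s)⁻¹ * ψ (s / c)
    rw [hχz, hψz]
  -- Block A : shifting the sum over S by a unit 1 + y
  have hA : ∀ y ∈ Y, (∑ x ∈ S, eterm χ ψ c (x * (1 + y))) = ∑ x ∈ S, eterm χ ψ c x := by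
    intro y hy
    have hy1 := h1y (hYP y hy)
    have hstep : ∀ a ∈ S, a * (1 + y) ≠ 0 ∧ vF (a * (1 + y)) = 0 := by
      intro a ha
      obtain ⟨ha0, hva⟩ := hSmem a ha
      exact ⟨mul_ne_zero ha0 hy1.1, by rw [hvF.map_mul _ _ ha0 hy1.1, hva, hy1.2]; ring⟩
    have hstep' : ∀ a ∈ S, a * (1 + y)⁻¹ ≠ 0 ∧ vF (a * (1 + y)⁻¹) = 0 := by
      intro a ha
      obtain ⟨ha0, hva⟩ := hSmem a ha
      refine ⟨mul_ne_zero ha0 (inv_ne_zero hy1.1), ?_⟩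
      rw [hvF.map_mul _ _ ha0 (inv_ne_zero hy1.1), hva, hvF.v_inv hy1.1, hy1.2]; ring
    refine Finset.sum_nbij' (fun x => rS (x * (1 + y))) (fun x => rS (x * (1 + y)⁻¹))
      ?_ ?_ ?_ ?_ ?_
    · intro a ha; exact (hrS _ (hstep a ha).1 (hstep a ha).2).1
    · intro a ha; exact (hrS _ (hstep' a ha).1 (hstep' a ha).2).1
    · intro a ha
      obtain ⟨ha0, hva⟩ := hSmem a ha
      obtain ⟨hbS, hbrel⟩ := hrS _ (hstep a ha).1 (hstep a ha).2
      obtain ⟨hb0, hvb⟩ := hSmem _ hbS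
      apply hrSeq _ a (mul_ne_zero hb0 (inv_ne_zero hy1.1))
        (by rw [hvF.map_mul _ _ hb0 (inv_ne_zero hy1.1), hvb, hvF.v_inv hy1.1, hy1.2]; ring) ha
      have e : rS (a * (1 + y)) * (1 + y)⁻¹ * a⁻¹ = (a * (1 + y) * (rS (a * (1 + y)))⁻¹)⁻¹ := by
        field_simp
      rw [e]
      exact InU.inv hvF hbrel
    · intro a ha
      obtain ⟨ha0, hva⟩ := hSmem a ha
      obtain ⟨hbS, hbrel⟩ := hrS _ (hstep' a ha).1 (hstep' a ha).2
      obtain ⟨hb0, hvb⟩ := hSmem _ hbS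
      apply hrSeq _ a (mul_ne_zero hb0 hy1.1)
        (by rw [hvF.map_mul _ _ hb0 hy1.1, hvb, hy1.2]; ring) ha
      have e : rS (a * (1 + y)⁻¹) * (1 + y) * a⁻¹
          = (a * (1 + y)⁻¹ * (rS (a * (1 + y)⁻¹))⁻¹)⁻¹ := by
        field_simp
      rw [e]
      exact InU.inv hvF hbrel
    · intro a ha
      obtain ⟨hbS, hbrel⟩ := hrS _ (hstep a ha).1 (hstep a ha).2
      exact hfcon _ _ (hstep a ha).1 (hstep a ha).2 (hSmem _ hbS).1 (hSmem _ hbS).2 hbrel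
  -- Block B : the term identity
  have hB : ∀ x ∈ S, ∀ y ∈ Y,
      eterm χ ψ c (x * (1 + y)) = eterm χ ψ c x * ψ ((x - 1) / c * y) := by
    intro x hx y hy
    obtain ⟨hx0, hvx⟩ := hSmem x hx
    have hy1 := h1y (hYP y hy)
    have hχm : χ (x * (1 + y)) = χ x * ψ (y / c) := by
      rw [hχ.map_mul x _ hx0 hy1.1, hcchar y (hYP y hy)]
    have hsplit : x * (1 + y) / c = x / c + (y / c + (x - 1) / c * y) := by ring
    show (χ (x * (1 + y)))⁻¹ * ψ (x * (1 + y) / c)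
        = (χ x)⁻¹ * ψ (x / c) * ψ ((x - 1) / c * y)
    rw [hχm, hsplit, hψ.map_add, hψ.map_add, mul_inv]
    have h1 := hψne (y / c)
    set A := ψ (x / c)
    set B := ψ (y / c)
    set C := ψ ((x - 1) / c * y)
    field_simp
  -- Block C matters: good x
  have hgood : ∀ x : F, x ≠ 0 → vF x = 0 → InP vF (d : ℤ) (x - 1) →
      eterm χ ψ c x = ψ c⁻¹ ∧ ∀ y ∈ Y, ψ ((x - 1) / c * y) = 1 := by
    intro x hx0 hvx hxg
    constructor
    · have h1 : χ x = ψ ((x - 1) / c) := by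
        have h := hcchar (x - 1) hxg
        have e : (1 : F) + (x - 1) = x := by ring
        rwa [e] at h
      have h2 : ψ (x / c) = ψ c⁻¹ * ψ ((x - 1) / c) := by
        rw [← hψ.map_add]
        congr 1
        field_simp
        ring
      show (χ x)⁻¹ * ψ (x / c) = ψ c⁻¹
      rw [h1, h2, mul_comm (ψ c⁻¹), inv_mul_cancel_left₀ (hψne _)]
    · intro y hy
      apply htriv
      by_cases h0 : x - 1 = 0
      · have e : (x - 1) / c * y = 0 := by rw [h0]; simp
        rw [e]; exact InP.zero
      · have hb0 : (x - 1) / c ≠ 0 := div_ne_zero h0 hc0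
        have hvb : vF ((x - 1) / c) = vF (x - 1) - vF c := hvF.v_div h0 hc0
        have hle := hxg.v_le h0
        exact InP.mul hvF hb0 (hYP y hy) (by rw [hvb, hvc]; omega)
  -- Block C : bad x gives zero character sum
  have hC : ∀ x ∈ S, ¬ InP vF (d : ℤ) (x - 1) → (∑ y ∈ Y, ψ ((x - 1) / c * y)) = 0 := by
    intro x hx hbad
    obtain ⟨hx0, hvx⟩ := hSmem x hx
    have hx1 : x - 1 ≠ 0 := fun h => hbad (Or.inl h)
    have hvx1 : 0 ≤ vF (x - 1) ∧ vF (x - 1) < d := by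
      constructor
      · have h := hvF.min_le_add x (-1) hx0 (by norm_num) (by rwa [← sub_eq_add_neg])
        rw [hvF.v_neg_one, hvx, ← sub_eq_add_neg] at h
        simpa using h
      · by_contra hcon
        push_neg at hcon
        exact hbad (Or.inr hcon)
    set b := (x - 1) / c with hbdef
    have hb0 : b ≠ 0 := div_ne_zero hx1 hc0
    have hvb : vF b = vF (x - 1) - (2 * (d : ℤ) + n) := by
      rw [hbdef, hvF.v_div hx1 hc0, hvc]
    obtain ⟨x0, hx0P, hx0ne⟩ := hψcond.2
    have hx00 : x0 ≠ 0 := fun h => hx0ne (by rw [h]; exact hψ.map_zero)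
    have hvx0 : vF x0 = -n - 1 := by
      have h1 := hx0P.v_le hx00
      by_contra hcon
      exact hx0ne (htriv x0 (InP.of_val hx00 (by omega)))
    set y0 := x0 / b with hy0def
    have hy00 : y0 ≠ 0 := div_ne_zero hx00 hb0
    have hvy0 : InP vF (d : ℤ) y0 :=
      InP.of_val hy00 (by rw [hy0def, hvF.v_div hx00 hb0, hvx0, hvb]; omega)
    have hby0 : ψ (b * y0) = ψ x0 := by
      rw [hy0def]
      congr 1
      field_simp
    -- the shifted-sum identity
    have hshift : ∀ y ∈ Y, ψ (b * rY (y + y0)) = ψ (b * y) * ψ (b * y0) := by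
      intro y hy
      obtain ⟨hmem, hrel⟩ := hrY (y + y0) ((hYP y hy).add hvF hvy0)
      have hz1 : ψ (b * ((y + y0) - rY (y + y0))) = 1 := by
        apply htriv
        refine InP.mul hvF hb0 hrel ?_
        rw [hvb]; push_cast; omega
      have e1 : ψ (b * (y + y0)) = ψ (b * rY (y + y0)) * ψ (b * ((y + y0) - rY (y + y0))) := by
        rw [← hψ.map_add]; congr 1; ring
      have e2 : ψ (b * (y + y0)) = ψ (b * y) * ψ (b * y0) := by
        rw [← hψ.map_add]; congr 1; ring
      rw [hz1, mul_one] at e1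
      rw [← e1, e2]
    have hbij : (∑ y ∈ Y, ψ (b * rY (y + y0))) = ∑ y ∈ Y, ψ (b * y) := by
      refine Finset.sum_nbij' (fun y => rY (y + y0)) (fun y => rY (y - y0)) ?_ ?_ ?_ ?_ ?_
      · intro a ha; exact (hrY _ ((hYP a ha).add hvF hvy0)).1
      · intro a ha; exact (hrY _ ((hYP a ha).sub hvF hvy0)).1
      · intro a ha
        obtain ⟨hmem, hrel⟩ := hrY (a + y0) ((hYP a ha).add hvF hvy0)
        apply hrYeq _ a ((hYP _ hmem).sub hvF hvy0) ha
        have e : rY (a + y0) - y0 - a = -((a + y0) - rY (a + y0)) := by ring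
        rw [e]
        exact hrel.neg hvF
      · intro a ha
        obtain ⟨hmem, hrel⟩ := hrY (a - y0) ((hYP a ha).sub hvF hvy0)
        apply hrYeq _ a ((hYP _ hmem).add hvF hvy0) ha
        have e : rY (a - y0) + y0 - a = -((a - y0) - rY (a - y0)) := by ring
        rw [e]
        exact hrel.neg hvF
      · intro a ha; rfl
    have hsum2 : (∑ y ∈ Y, ψ (b * rY (y + y0))) = (∑ y ∈ Y, ψ (b * y)) * ψ (b * y0) := by
      rw [Finset.sum_mul]
      exact Finset.sum_congr rfl hshift
    have hconArg : ∀ y : F, (x - 1) / c * y = b * y := fun y => rfl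
    have hkey : (∑ y ∈ Y, ψ (b * y)) * (ψ x0 - 1) = 0 := by
      have := hbij.symm.trans hsum2
      rw [hby0] at this
      linear_combination -this
    rcases mul_eq_zero.1 hkey with h | h
    · simpa [hbdef] using h
    · exact absurd (by linear_combination h) hx0ne
  -- Block D : the number of good representatives is q^d
  have hDcard : (S.filter (fun s => InP vF (d : ℤ) (s - 1))).card = q ^ d := by
    rw [← hYcard]
    apply Finset.card_nbij' (fun s => rY (s - 1)) (fun y => rS (1 + y))
    · intro a ha
      rw [Finset.mem_coe, Finset.mem_filter] at ha
      exact (hrY _ ha.2).1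
    · intro y hy
      have hy1 := h1y (hYP y hy)
      obtain ⟨hmem, hrel⟩ := hrS (1 + y) hy1.1 hy1.2
      refine Finset.mem_filter.2 ⟨hmem, ?_⟩
      obtain ⟨hs0, hvs⟩ := hSmem _ hmem
      have h2d : InP vF ((d : ℤ) + (d : ℕ)) ((rS (1 + y) - 1) - y) := by
        have e : (rS (1 + y) - 1) - y = -(rS (1 + y) * ((1 + y) * (rS (1 + y))⁻¹ - 1)) := by
          field_simp
          ring
        rw [e]
        exact InP.neg hvF
          (InP.mul hvF hs0 (InU.sub_one hvF hrel) (by rw [hvs]; push_cast; omega))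
      have e : rS (1 + y) - 1 = ((rS (1 + y) - 1) - y) + y := by ring
      rw [e]
      exact InP.add hvF (h2d.of_le (by push_cast; omega)) (hYP y hy)
    · intro a ha
      rw [Finset.mem_coe, Finset.mem_filter] at ha
      obtain ⟨haS, hag⟩ := ha
      obtain ⟨ha0, hva⟩ := hSmem a haS
      obtain ⟨hmem, hrel⟩ := hrY (a - 1) hag
      have ht1 := h1y (hYP _ hmem)
      apply hrSeq _ a ht1.1 ht1.2 haS
      refine InU.mk (mul_ne_zero ht1.1 (inv_ne_zero ha0))
        (by rw [hvF.map_mul _ _ ht1.1 (inv_ne_zero ha0), ht1.2, hvF.v_inv ha0, hva]; ring) ?_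
      have e : (1 + rY (a - 1)) * a⁻¹ - 1 = a⁻¹ * (-((a - 1) - rY (a - 1))) := by
        field_simp
        ring
      rw [e]
      refine InP.mul hvF (inv_ne_zero ha0) (hrel.neg hvF) ?_
      rw [hvF.v_inv ha0, hva]
      push_cast; omega
    · intro y hy
      have hy1 := h1y (hYP y hy)
      obtain ⟨hmem, hrel⟩ := hrS (1 + y) hy1.1 hy1.2
      obtain ⟨hs0, hvs⟩ := hSmem _ hmem
      have h2d : InP vF ((d : ℤ) + (d : ℕ)) ((rS (1 + y) - 1) - y) := by
        have e : (rS (1 + y) - 1) - y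
            = -(rS (1 + y) * ((1 + y) * (rS (1 + y))⁻¹ - 1)) := by
          field_simp
          ring
        rw [e]
        refine InP.neg hvF ?_
        exact InP.mul hvF hs0 (InU.sub_one hvF hrel) (by rw [hvs]; push_cast; omega)
      have hd1 : InP vF (d : ℤ) (rS (1 + y) - 1) := by
        have e : rS (1 + y) - 1 = ((rS (1 + y) - 1) - y) + y := by ring
        rw [e]
        exact InP.add hvF (h2d.of_le (by push_cast; omega)) (hYP y hy)
      exact hrYeq _ y hd1 hy h2d
  -- Block E : assembling
  have hquot : ∀ x ∈ S, (∑ y ∈ Y, ψ ((x - 1) / c * y))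
      = if InP vF (d : ℤ) (x - 1) then ((q : ℂ)) ^ d else 0 := by
    intro x hx
    by_cases hgd : InP vF (d : ℤ) (x - 1)
    · rw [if_pos hgd]
      obtain ⟨hx0, hvx⟩ := hSmem x hx
      calc (∑ y ∈ Y, ψ ((x - 1) / c * y)) = ∑ _y ∈ Y, (1 : ℂ) :=
            Finset.sum_congr rfl (fun y hy => (hgood x hx0 hvx hgd).2 y hy)
        _ = (Y.card : ℂ) := by simp
        _ = (q : ℂ) ^ d := by rw [hYcard]; push_cast; ring
    · rw [if_neg hgd]
      exact hC x hx hgd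
  have hmain : (Y.card : ℂ) * (∑ x ∈ S, eterm χ ψ c x)
      = (Y.card : ℂ) * ((q : ℂ) ^ d * ψ c⁻¹) := by
    have e1 : (∑ y ∈ Y, ∑ x ∈ S, eterm χ ψ c (x * (1 + y)))
        = (Y.card : ℂ) * ∑ x ∈ S, eterm χ ψ c x := by
      rw [Finset.sum_congr rfl hA, Finset.sum_const, nsmul_eq_mul]
    have e2 : (∑ y ∈ Y, ∑ x ∈ S, eterm χ ψ c (x * (1 + y)))
        = ∑ x ∈ S, ∑ y ∈ Y, eterm χ ψ c (x * (1 + y)) := Finset.sum_comm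
    have e3 : (∑ x ∈ S, ∑ y ∈ Y, eterm χ ψ c (x * (1 + y)))
        = ∑ x ∈ S, (if InP vF (d : ℤ) (x - 1) then eterm χ ψ c x * (q : ℂ) ^ d else 0) := by
      refine Finset.sum_congr rfl ?_
      intro x hx
      rw [Finset.sum_congr rfl (fun y hy => hB x hx y hy), ← Finset.mul_sum, hquot x hx,
        mul_ite, mul_zero]
    have e4 : (∑ x ∈ S, (if InP vF (d : ℤ) (x - 1) then eterm χ ψ c x * (q : ℂ) ^ d else 0))
        = ∑ x ∈ S.filter (fun s => InP vF (d : ℤ) (s - 1)), eterm χ ψ c x * (q : ℂ) ^ d :=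
      (Finset.sum_filter _ _).symm
    have e5 : (∑ x ∈ S.filter (fun s => InP vF (d : ℤ) (s - 1)), eterm χ ψ c x * (q : ℂ) ^ d)
        = ∑ _x ∈ S.filter (fun s => InP vF (d : ℤ) (s - 1)), ψ c⁻¹ * (q : ℂ) ^ d := by
      refine Finset.sum_congr rfl ?_
      intro x hx
      rw [Finset.mem_filter] at hx
      rw [(hgood x (hSmem x hx.1).1 (hSmem x hx.1).2 hx.2).1]
    rw [← e1, e2, e3, e4, e5, Finset.sum_const, hDcard, nsmul_eq_mul, hYcard]
    push_cast
    ring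
  have hYne : ((Y.card : ℕ) : ℂ) ≠ 0 := by
    rw [hYcard]
    push_cast
    exact pow_ne_zero _ (Nat.cast_ne_zero.2 hq0.ne')
  have hsum : (∑ x ∈ S, eterm χ ψ c x) = (q : ℂ) ^ d * ψ c⁻¹ :=
    mul_left_cancel₀ hYne hmain
  have hgoal : (∑ x ∈ S, (χ x)⁻¹ * ψ (x / c)) = ∑ x ∈ S, eterm χ ψ c x := rfl
  rw [hgoal, hsum]
  have hqC : (q : ℂ) ≠ 0 := Nat.cast_ne_zero.2 hq0.ne'
  rw [zpow_neg, zpow_natCast, mul_assoc, inv_mul_cancel_left₀ (pow_ne_zero d hqC)]
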